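/- arXiv:1509.07752 — 3 statements merged into one kernel-verified Lean document; each statement's English description precedes it below -/
import Mathlib

section
/- Let G be a group, K a subgroup of G, σ a group automorphism of G with σ(K) = K, and w ∈ G. Consider the double coset KwK = {k₁ w k₂ : k₁, k₂ ∈ K}. Define an equivalence relation on KwK by g ∼ g′ iff g′ = k g σ(k)⁻¹ for some k ∈ K, and an equivalence relation on K by k ∼′ k″ iff k″ = h k σ(w h w⁻¹)⁻¹ for some h ∈ K ∩ w⁻¹Kw. Then the map k ↦ w·k from K to KwK induces a well-defined bijection from the quotient K/∼′ onto the quotient (KwK)/∼. (This is the identification K/(K ∩ w⁻¹Kw)_{σ′} ≅ KwK/K_σ, where σ′ = σ ∘ Ad(w), used in the paper's proof of the G-stable-piece decomposition and of the finiteness of fibers.) -/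
/-- The double coset `K w K = {k₁ * w * k₂ : k₁, k₂ ∈ K}`. -/
def doubleCoset {G : Type*} [Group G] (K : Subgroup G) (w : G) : Set G :=
  {g : G | ∃ k₁ ∈ K, ∃ k₂ ∈ K, g = k₁ * w * k₂}

/-- The relation on `K w K` given by `σ`-twisted conjugation by `K`:
`g ∼ g'` iff `g' = k * g * σ(k)⁻¹` for some `k ∈ K`. -/
def twistRel {G : Type*} [Group G] (K : Subgroup G) (σ : G ≃* G) (w : G) :
    doubleCoset K w → doubleCoset K w → Prop :=
  fun g g' => ∃ k ∈ K, (g' : G) = k * (g : G) * (σ k)⁻¹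

/-- The relation on `K` given by `k ∼′ k''` iff `k'' = h * k * σ(w h w⁻¹)⁻¹`
for some `h ∈ K ∩ w⁻¹ K w`. -/
def subTwistRel {G : Type*} [Group G] (K : Subgroup G) (σ : G ≃* G) (w : G) :
    K → K → Prop :=
  fun k k'' => ∃ h : G, h ∈ K ∧ w * h * w⁻¹ ∈ K ∧
    (k'' : G) = h * (k : G) * (σ (w * h * w⁻¹))⁻¹

theorem twistRel_equiv {G : Type*} [Group G] (K : Subgroup G) (σ : G ≃* G) (w : G) :
    Equivalence (twistRel K σ w) := by
  constructor
  · intro g; exact ⟨1, K.one_mem, by simp⟩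
  · rintro a b ⟨k, hk, hb⟩
    refine ⟨k⁻¹, K.inv_mem hk, ?_⟩
    rw [hb, map_inv]; group
  · rintro a b c ⟨k, hk, hb⟩ ⟨m, hm, hc⟩
    refine ⟨m * k, K.mul_mem hm hk, ?_⟩
    rw [hc, hb, map_mul]; group

theorem subTwistRel_equiv {G : Type*} [Group G] (K : Subgroup G) (σ : G ≃* G) (w : G) :
    Equivalence (subTwistRel K σ w) := by
  constructor
  · intro k
    exact ⟨1, K.one_mem, by simpa using K.one_mem, by simp⟩
  · rintro a b ⟨h, hK, hwK, hb⟩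
    refine ⟨h⁻¹, K.inv_mem hK, ?_, ?_⟩
    · have : w * h⁻¹ * w⁻¹ = (w * h * w⁻¹)⁻¹ := by group
      rw [this]; exact K.inv_mem hwK
    · have : w * h⁻¹ * w⁻¹ = (w * h * w⁻¹)⁻¹ := by group
      rw [this, map_inv, hb]; group
  · rintro a b c ⟨h, hK, hwK, hb⟩ ⟨m, mK, mwK, hc⟩
    refine ⟨m * h, K.mul_mem mK hK, ?_, ?_⟩
    · have : w * (m * h) * w⁻¹ = (w * m * w⁻¹) * (w * h * w⁻¹) := by group
      rw [this]; exact K.mul_mem mwK hwK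
    · have : w * (m * h) * w⁻¹ = (w * m * w⁻¹) * (w * h * w⁻¹) := by group
      rw [this, map_mul, hc, hb]; group

/-- The map `k ↦ w * k` induces a well-defined bijection
`K/(K ∩ w⁻¹Kw)_{σ′} ≅ (KwK)/K_σ`, where `σ′ = σ ∘ Ad(w)`. -/
theorem wk_induces_bijection {G : Type*} [Group G] (K : Subgroup G) (σ : G ≃* G)
    (hσK : ∀ g : G, g ∈ K ↔ σ g ∈ K) (w : G) :
    ∃ e : Quot (subTwistRel K σ w) ≃ Quot (twistRel K σ w),
      ∀ k : K, e (Quot.mk (subTwistRel K σ w) k) =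
        Quot.mk (twistRel K σ w)
          ⟨w * (k : G), ⟨1, K.one_mem, (k : G), k.2, by rw [one_mul]⟩⟩ := by
  set wk : K → doubleCoset K w :=
    fun k => ⟨w * (k : G), ⟨1, K.one_mem, (k : G), k.2, by rw [one_mul]⟩⟩ with hwk
  have key : ∀ a b : K, subTwistRel K σ w a b ↔ twistRel K σ w (wk a) (wk b) := by
    intro a b
    constructor
    · rintro ⟨h, hK, hwK, hb⟩
      refine ⟨w * h * w⁻¹, hwK, ?_⟩
      show w * (b : G) = (w * h * w⁻¹) * (w * (a : G)) * (σ (w * h * w⁻¹))⁻¹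
      rw [hb]; group
    · rintro ⟨m, hm, hb⟩
      have hb' : (b : G) = (w⁻¹ * m * w) * (a : G) * (σ (w * (w⁻¹ * m * w) * w⁻¹))⁻¹ := by
        have h2 : w * (w⁻¹ * m * w) * w⁻¹ = m := by group
        rw [h2]
        have : w * (b : G) = m * (w * (a : G)) * (σ m)⁻¹ := hb
        have := congrArg (fun x => w⁻¹ * x) this
        simpa [mul_assoc] using this
      have hmem : w⁻¹ * m * w ∈ K := by
        have : (w⁻¹ * m * w : G) = (b : G) * (σ (w * (w⁻¹ * m * w) * w⁻¹)) * (a : G)⁻¹ := by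
          rw [hb']; group
        rw [this]
        have h2 : w * (w⁻¹ * m * w) * w⁻¹ = m := by group
        rw [h2]
        exact K.mul_mem (K.mul_mem b.2 ((hσK m).mp hm)) (K.inv_mem a.2)
      refine ⟨w⁻¹ * m * w, hmem, ?_, hb'⟩
      have h2 : w * (w⁻¹ * m * w) * w⁻¹ = m := by group
      rw [h2]; exact hm
  let F : Quot (subTwistRel K σ w) → Quot (twistRel K σ w) :=
    Quot.lift (fun k => Quot.mk _ (wk k))
      (fun a b hab => Quot.sound ((key a b).mp hab))
  have hFsurj : Function.Surjective F := by
    intro q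
    induction q using Quot.ind with
    | _ g =>
      obtain ⟨g, k₁, hk₁, k₂, hk₂, hg⟩ := g
      have hk' : k₂ * σ k₁ ∈ K := K.mul_mem hk₂ ((hσK k₁).mp hk₁)
      refine ⟨Quot.mk _ ⟨k₂ * σ k₁, hk'⟩, ?_⟩
      show Quot.mk _ (wk ⟨k₂ * σ k₁, hk'⟩) = Quot.mk _ ⟨g, _⟩
      refine (Quot.sound ?_).symm
      refine ⟨k₁⁻¹, K.inv_mem hk₁, ?_⟩
      show w * (k₂ * σ k₁) = k₁⁻¹ * g * (σ k₁⁻¹)⁻¹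
      rw [hg, map_inv]; group
  have hFinj : Function.Injective F := by
    intro p q
    induction p using Quot.ind with
    | _ a =>
      induction q using Quot.ind with
      | _ b =>
        intro hpq
        have : twistRel K σ w (wk a) (wk b) := by
          have := (Quot.eq.mp hpq)
          exact ((twistRel_equiv K σ w).eqvGen_iff).mp this
        exact Quot.sound ((key a b).mpr this)
  exact ⟨Equiv.ofBijective F ⟨hFinj, hFsurj⟩, fun k => rfl⟩
end

section
/- Let (W, S) be a Coxeter system with length function ℓ, and let σ be a group automorphism of W with σ(S) = S (hence ℓ(σ(w)) = ℓ(w) for all w ∈ W). If w ∈ W is σ-straight, then w has minimal length in its σ-conjugacy class: for every x ∈ W, ℓ(x w σ(x)⁻¹) ≥ ℓ(w). -/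
/-!
Conjugating `w` to `w' = x w σ(x)⁻¹` twists the products `g_m` by the same element:
`g_m(w) = x⁻¹ g_m(w') σ^m(x)`. Since `σ` preserves length, `ℓ(g_m(w')) ≤ m ℓ(w')`, hence
`m ℓ(w) = ℓ(g_m(w)) ≤ m ℓ(w') + 2 ℓ(x)` for every `m`; taking `m = 2 ℓ(x) + 1` forces
`ℓ(w) ≤ ℓ(w')`.
-/

/-- For an automorphism `σ` of a group `W` and `w ∈ W`, the twisted product
`g_m(w) = w · σ(w) · σ²(w) ⋯ σ^{m−1}(w)`. -/
def twistProd {W : Type*} [Group W] (σ : W → W) (w : W) (m : ℕ) : W :=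
  ((List.range m).map fun i => σ^[i] w).prod

section TwistProd

variable {W : Type*} [Group W]

theorem twistProd_zero (σ : W → W) (w : W) : twistProd σ w 0 = 1 := rfl

theorem twistProd_succ (σ : W → W) (w : W) (m : ℕ) :
    twistProd σ w (m + 1) = twistProd σ w m * σ^[m] w := by
  simp [twistProd, List.range_succ]

theorem twistProd_conj {F : Type*} [FunLike F W W] [MonoidHomClass F W W] (σ : F)
    (w x : W) (m : ℕ) :
    twistProd σ (x * w * (σ x)⁻¹) m = x * twistProd σ w m * (σ^[m] x)⁻¹ := by
  induction m with
  | zero => simp [twistProd_zero]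
  | succ m ih =>
    rw [twistProd_succ, twistProd_succ, ih, iterate_map_mul, iterate_map_mul, iterate_map_inv,
      ← Function.iterate_succ_apply]
    group

end TwistProd

namespace CoxeterSystem

variable {B W : Type*} [Group W] {M : CoxeterMatrix B} (cs : CoxeterSystem M W)

theorem length_map_le_of_forall_simple_mem_range (f : W →* W)
    (hf : ∀ i, f (cs.simple i) ∈ Set.range cs.simple) (w : W) :
    cs.length (f w) ≤ cs.length w := by
  choose g hg using hf
  obtain ⟨ω, hω, rfl⟩ := cs.exists_isReduced w
  have hmap : f (cs.wordProd ω) = cs.wordProd (ω.map g) := by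
    simp only [wordProd, map_list_prod, List.map_map]
    exact congrArg List.prod (List.map_congr_left fun i _ => (hg i).symm)
  calc cs.length (f (cs.wordProd ω)) ≤ (ω.map g).length := hmap ▸ cs.length_wordProd_le _
    _ = cs.length (cs.wordProd ω) := by rw [List.length_map, hω.eq]

theorem length_map_of_image_range_simple (σ : W ≃* W)
    (hσ : σ '' Set.range cs.simple = Set.range cs.simple) (w : W) :
    cs.length (σ w) = cs.length w := by
  have hσ_simple : ∀ i, σ (cs.simple i) ∈ Set.range cs.simple :=
    fun i => hσ ▸ Set.mem_image_of_mem σ (Set.mem_range_self i)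
  have hσ_symm_simple : ∀ i, σ.symm (cs.simple i) ∈ Set.range cs.simple := by
    intro i
    obtain ⟨s, hs, hsi⟩ := hσ.symm ▸ Set.mem_range_self (f := cs.simple) i
    simpa [← hsi] using hs
  refine le_antisymm (cs.length_map_le_of_forall_simple_mem_range σ hσ_simple w) ?_
  simpa using cs.length_map_le_of_forall_simple_mem_range σ.symm.toMonoidHom hσ_symm_simple (σ w)

theorem length_iterate_map_of_image_range_simple (σ : W ≃* W)
    (hσ : σ '' Set.range cs.simple = Set.range cs.simple) (w : W) (n : ℕ) :
    cs.length (σ^[n] w) = cs.length w := by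
  induction n with
  | zero => rfl
  | succ n ih => rw [Function.iterate_succ_apply', cs.length_map_of_image_range_simple σ hσ, ih]

theorem length_twistProd_le (σ : W ≃* W)
    (hσ : σ '' Set.range cs.simple = Set.range cs.simple) (w : W) (m : ℕ) :
    cs.length (twistProd σ w m) ≤ m * cs.length w := by
  induction m with
  | zero => simp [twistProd_zero]
  | succ m ih =>
    calc cs.length (twistProd σ w (m + 1))
        ≤ cs.length (twistProd σ w m) + cs.length (σ^[m] w) := by
          rw [twistProd_succ]; exact cs.length_mul_le _ _
      _ ≤ m * cs.length w + cs.length w := by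
          rw [cs.length_iterate_map_of_image_range_simple σ hσ]; omega
      _ = (m + 1) * cs.length w := by ring

theorem length_twistProd_le_of_conj (σ : W ≃* W)
    (hσ : σ '' Set.range cs.simple = Set.range cs.simple) (w x : W) (m : ℕ) :
    cs.length (twistProd σ w m) ≤ m * cs.length (x * w * (σ x)⁻¹) + 2 * cs.length x := by
  have hconj : twistProd σ w m = x⁻¹ * twistProd σ (x * w * (σ x)⁻¹) m * σ^[m] x := by
    rw [twistProd_conj]
    group
  have hmid := cs.length_twistProd_le σ hσ (x * w * (σ x)⁻¹) m
  have hleft := cs.length_mul_le x⁻¹ (twistProd σ (x * w * (σ x)⁻¹) m)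
  have hright := cs.length_mul_le (x⁻¹ * twistProd σ (x * w * (σ x)⁻¹) m) (σ^[m] x)
  rw [cs.length_inv] at hleft
  rw [cs.length_iterate_map_of_image_range_simple σ hσ] at hright
  rw [hconj]
  omega

end CoxeterSystem

/-- If `(W, S)` is a Coxeter system, `σ` an automorphism of `W` with `σ(S) = S`,
and `w ∈ W` is `σ`-straight, then `w` has minimal length in its `σ`-conjugacy class:
`ℓ(x w σ(x)⁻¹) ≥ ℓ(w)` for all `x`. -/
theorem straight_minimal_length {B W : Type*} [Group W] {M : CoxeterMatrix B}
    (cs : CoxeterSystem M W) (σ : W ≃* W)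
    (hσS : ⇑σ '' Set.range cs.simple = Set.range cs.simple)
    (w : W)
    (hw : ∀ m : ℕ, 1 ≤ m → cs.length (twistProd σ w m) = m * cs.length w) :
    ∀ x : W, cs.length w ≤ cs.length (x * w * (σ x)⁻¹) := by
  intro x
  set c := 2 * cs.length x
  have hbound : (c + 1) * cs.length w ≤ (c + 1) * cs.length (x * w * (σ x)⁻¹) + c :=
    hw (c + 1) (Nat.le_add_left 1 c) ▸ cs.length_twistProd_le_of_conj σ hσS w x (c + 1)
  by_contra! hlt
  nlinarith
end

section
/- Let (W, S) be a Coxeter system with length function ℓ, and let σ be a group automorphism of W with σ(S) = S. Let w ∈ W and suppose there is a constant C ≥ 0 such that ℓ(g_m(w)) ≥ m · ℓ(w) − C for all m ≥ 1, where g_m(w) = w · σ(w) ⋯ σ^{m−1}(w). Then w is σ-straight, i.e., ℓ(g_m(w)) = m · ℓ(w) for all m ≥ 1. -/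
theorem Subadditive.mul_le_of_forall_mul_sub_le {u : ℕ → ℝ} (h : Subadditive u) {c C : ℝ}
    (hu : ∀ n : ℕ, 1 ≤ n → n * c - C ≤ u n) {n : ℕ} (hn : 1 ≤ n) : n * c ≤ u n := by
  by_contra! hdefect
  obtain ⟨k, hk⟩ := exists_nat_gt (C / (n * c - u n))
  have hmul : u (k * n + n) ≤ (k + 1) * u n := by
    linarith [h.apply_mul_add_le k n n]
  have hlow := hu (k * n + n) (by omega)
  have hk_large : C < (k + 1) * (n * c - u n) := by
    rw [div_lt_iff₀ (by linarith)] at hk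
    nlinarith
  push_cast at hlow
  nlinarith

namespace CoxeterSystem

variable {B B' W H : Type*} [Group W] [Group H] {M : CoxeterMatrix B} {M' : CoxeterMatrix B'}

theorem length_map_le (cs : CoxeterSystem M W) (cs' : CoxeterSystem M' H) (f : W →* H)
    (hf : ∀ i, ∃ j, f (cs.simple i) = cs'.simple j) (v : W) :
    cs'.length (f v) ≤ cs.length v := by
  choose g hg using hf
  obtain ⟨ω, hω, rfl⟩ := cs.exists_isReduced v
  have hword : f (cs.wordProd ω) = cs'.wordProd (ω.map g) := by
    simp only [wordProd, map_list_prod, List.map_map]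
    congr 1
    exact List.map_congr_left fun i _ => hg i
  rw [hword, hω.eq]
  simpa using cs'.length_wordProd_le (ω.map g)

theorem length_apply_of_image_simple (cs : CoxeterSystem M W) (σ : W ≃* W)
    (hσS : ⇑σ '' Set.range cs.simple = Set.range cs.simple) (v : W) :
    cs.length (σ v) = cs.length v := by
  have hσ : ∀ i, ∃ j, σ (cs.simple i) = cs.simple j := fun i => by
    obtain ⟨j, hj⟩ : σ (cs.simple i) ∈ Set.range cs.simple := hσS ▸ ⟨_, ⟨i, rfl⟩, rfl⟩
    exact ⟨j, hj.symm⟩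
  have hσ_symm : ∀ i, ∃ j, σ.symm (cs.simple i) = cs.simple j := fun i => by
    obtain ⟨_, ⟨j, rfl⟩, hj⟩ : cs.simple i ∈ ⇑σ '' Set.range cs.simple := by
      rw [hσS]; exact ⟨i, rfl⟩
    exact ⟨j, by rw [← hj, MulEquiv.symm_apply_apply]⟩
  refine le_antisymm (cs.length_map_le cs σ.toMonoidHom hσ v) ?_
  simpa using cs.length_map_le cs σ.symm.toMonoidHom hσ_symm (σ v)

end CoxeterSystem

section twistProd

variable {W : Type*} [Group W]

@[simp]
theorem twistProd_one (σ : W → W) (w : W) : twistProd σ w 1 = w := by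
  simp [twistProd]

theorem twistProd_add (σ : W →* W) (w : W) (m n : ℕ) :
    twistProd σ w (m + n) = twistProd σ w m * σ^[m] (twistProd σ w n) := by
  simp only [twistProd, List.range_add, List.map_append, List.prod_append, List.map_map]
  congr 1
  induction List.range n with
  | nil => simp
  | cons i l ih =>
    simp only [List.map_cons, List.prod_cons, iterate_map_mul, ih, Function.comp_apply,
      Function.iterate_add_apply]

variable {B : Type*} {M : CoxeterMatrix B} (cs : CoxeterSystem M W) {σ : W →* W}
  (hσ : ∀ v, cs.length (σ v) = cs.length v) (w : W)
include hσ

theorem CoxeterSystem.length_twistProd_add_le (m n : ℕ) :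
    cs.length (twistProd σ w (m + n)) ≤
      cs.length (twistProd σ w m) + cs.length (twistProd σ w n) := by
  have hσ_iter : cs.length (σ^[m] (twistProd σ w n)) = cs.length (twistProd σ w n) :=
    Function.Iterate.rec (fun v => cs.length v = cs.length (twistProd σ w n)) rfl (fun v hv => (hσ v).trans hv) m
  rw [twistProd_add, ← hσ_iter]
  exact cs.length_mul_le _ _

theorem CoxeterSystem.subadditive_length_twistProd :
    Subadditive fun m => (cs.length (twistProd σ w m) : ℝ) := fun m n => by
  dsimp only
  exact_mod_cast cs.length_twistProd_add_le hσ w m n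

theorem CoxeterSystem.length_twistProd_le_s3 (m : ℕ) :
    cs.length (twistProd σ w m) ≤ m * cs.length w := by
  induction m with
  | zero => simp [twistProd]
  | succ m ih =>
    calc cs.length (twistProd σ w (m + 1))
        ≤ cs.length (twistProd σ w m) + cs.length w := by
          simpa using cs.length_twistProd_add_le hσ w m 1
      _ ≤ (m + 1) * cs.length w := by rw [add_one_mul]; omega

end twistProd

theorem straight_of_linear_lower_bound_general {B W : Type*} [Group W] {M : CoxeterMatrix B}
    (cs : CoxeterSystem M W) (σ : W ≃* W)
    (hσS : ⇑σ '' Set.range cs.simple = Set.range cs.simple)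
    (w : W) (C : ℤ)
    (hbound : ∀ m : ℕ, 1 ≤ m →
      (m : ℤ) * (cs.length w : ℤ) - C ≤ (cs.length (twistProd σ w m) : ℤ)) :
    ∀ m : ℕ, 1 ≤ m → cs.length (twistProd σ w m) = m * cs.length w := by
  intro m hm
  have hσ : ∀ v, cs.length ((σ : W →* W) v) = cs.length v :=
    cs.length_apply_of_image_simple σ hσS
  have hlower : (m : ℝ) * cs.length w ≤ cs.length (twistProd σ w m) :=
    (cs.subadditive_length_twistProd hσ w).mul_le_of_forall_mul_sub_le
      (C := C) (fun n hn => by exact_mod_cast hbound n hn) hm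
  exact le_antisymm (cs.length_twistProd_le_s3 hσ w m) (by exact_mod_cast hlower)

/-- If `(W, S)` is a Coxeter system, `σ` an automorphism of `W` with `σ(S) = S`,
`w ∈ W`, and there is a constant `C ≥ 0` with `ℓ(g_m(w)) ≥ m·ℓ(w) − C` for all
`m ≥ 1`, then `w` is `σ`-straight: `ℓ(g_m(w)) = m·ℓ(w)` for all `m ≥ 1`. -/
theorem straight_of_linear_lower_bound {B W : Type*} [Group W] {M : CoxeterMatrix B}
    (cs : CoxeterSystem M W) (σ : W ≃* W)
    (hσS : ⇑σ '' Set.range cs.simple = Set.range cs.simple)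
    (w : W) (C : ℤ) (hC : 0 ≤ C)
    (hbound : ∀ m : ℕ, 1 ≤ m →
      (m : ℤ) * (cs.length w : ℤ) - C ≤ (cs.length (twistProd σ w m) : ℤ)) :
    ∀ m : ℕ, 1 ≤ m → cs.length (twistProd σ w m) = m * cs.length w :=
  straight_of_linear_lower_bound_general cs σ hσS w C hbound
end
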